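/- arXiv:2601.06587 — 2 statements merged into one kernel-verified Lean document; each statement's English description precedes it below -/
import Mathlib

section
/- Let B be a finite connected band and k a commutative ring. Then the semigroup algebra kB has a two-sided identity element. -/
/-- The principal two-sided ideal `BbB = {u*b*v}` in a semigroup. -/
def prinIdeal {B : Type*} [Semigroup B] (b : B) : Set B := {z | ∃ u v : B, z = u * b * v}

/-- Connectivity of all the graphs `Γ_R(B,X)`: any two elements of the same support are
joined by a path whose steps join vertices of that support having a common upper bound
in the `R`-preorder (`a ≤_R b` iff `ba = a`). -/
def GammaRConnected (B : Type*) [Semigroup B] : Prop :=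
  ∀ x x' : B, prinIdeal x = prinIdeal x' →
    Relation.ReflTransGen
      (fun u v => prinIdeal u = prinIdeal v ∧ ∃ y : B, y * u = u ∧ y * v = v) x x'

/-- Connectivity of all the graphs `Γ_L(B,X)`: defined dually to `Γ_R` using the
`L`-preorder (`a ≤_L b` iff `ab = a`). -/
def GammaLConnected (B : Type*) [Semigroup B] : Prop :=
  ∀ x x' : B, prinIdeal x = prinIdeal x' →
    Relation.ReflTransGen
      (fun u v => prinIdeal u = prinIdeal v ∧ ∃ y : B, u * y = u ∧ v * y = v) x x'

/-!
A left identity of `kB` is built by descending induction over the ideals `T` of `B`: we find `u`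
with `u * f - f ∈ kT` for all `f`, starting from `u = 0` for `T = B`. If `m` is minimal outside
`T`, then `T' = T ∪ σ⁻¹(σ m)` is again an ideal; given `u` for `T'`, put `u₁ = u - (u m - m)`.
For an edge `a — c` of `Γ_R(B, σ m)` with common upper bound `y` we have
`(u a - a) d = (u y - y) a d`, and since the fibre is a rectangular band this gives
`(u a - a) d ≡ (u c - c) d` modulo `kT`; walking along a path from `d` to `m` yields `u₁ d ≡ d`.
So `u₁` is a left identity modulo `kT` on the ideal `kT'`, and then `2 u₁ - u₁²` is one on all of
`kB`. Applied to `Bᵐᵒᵖ`, the same argument with `Γ_L` gives a right identity, and a left and a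
right identity coincide.
-/

open MonoidAlgebra

section Band

variable {B : Type*} [Semigroup B]

theorem mem_prinIdeal_self (hband : ∀ x : B, x * x = x) (a : B) : a ∈ prinIdeal a :=
  ⟨a, a, by rw [hband, hband]⟩

theorem prinIdeal_subset_of_mem {a c : B} (h : a ∈ prinIdeal c) :
    prinIdeal a ⊆ prinIdeal c := by
  obtain ⟨p, q, rfl⟩ := h
  rintro z ⟨s, t, rfl⟩
  exact ⟨s * p, q * t, by simp only [mul_assoc]⟩

theorem prinIdeal_mul_subset_left (hband : ∀ x : B, x * x = x) (a b : B) :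
    prinIdeal (a * b) ⊆ prinIdeal a :=
  prinIdeal_subset_of_mem ⟨a, b, by rw [hband]⟩

theorem prinIdeal_mul_subset_right (hband : ∀ x : B, x * x = x) (a b : B) :
    prinIdeal (a * b) ⊆ prinIdeal b :=
  prinIdeal_subset_of_mem ⟨a, b, by rw [mul_assoc, hband]⟩

theorem mul_mul_self_of_mem_prinIdeal (hband : ∀ x : B, x * x = x) {a c : B}
    (h : a ∈ prinIdeal c) : a * c * a = a := by
  obtain ⟨p, q, rfl⟩ := h
  have hcq : ∀ z : B, z * c * q * c * q = z * c * q := fun z => by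
    rw [mul_assoc (z * c * q), mul_assoc (z * c), mul_assoc z, ← mul_assoc c q (c * q), hband,
      mul_assoc]
  calc p * c * q * c * (p * c * q) = p * c * q * c * (p * c * q * c * q) := by rw [hcq]
    _ = (p * c * q * c) * (p * c * q * c) * q := by simp only [mul_assoc]
    _ = p * c * q := by rw [hband, hcq]

theorem prinIdeal_mul_of_eq (hband : ∀ x : B, x * x = x) {a b : B}
    (h : prinIdeal a = prinIdeal b) : prinIdeal (a * b) = prinIdeal a := by
  refine (prinIdeal_mul_subset_left hband a b).antisymm (prinIdeal_subset_of_mem ⟨a, a, ?_⟩)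
  calc a = a * b * a :=
        (mul_mul_self_of_mem_prinIdeal hband (h ▸ mem_prinIdeal_self hband a)).symm
    _ = a * (a * b) * a := by rw [← mul_assoc a a, hband]

theorem mul_mul_eq_mul_of_prinIdeal_eq (hband : ∀ x : B, x * x = x) {a x b : B}
    (ha : prinIdeal a = prinIdeal x) (hb : prinIdeal b = prinIdeal x) : a * x * b = a * b := by
  have hab : prinIdeal (a * b) = prinIdeal x := by
    rw [prinIdeal_mul_of_eq hband (ha.trans hb.symm), ha]
  have haxa := mul_mul_self_of_mem_prinIdeal hband (ha ▸ mem_prinIdeal_self hband a)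
  have hbxb := mul_mul_self_of_mem_prinIdeal hband (hb ▸ mem_prinIdeal_self hband b)
  have hxabx := mul_mul_self_of_mem_prinIdeal hband (hab ▸ mem_prinIdeal_self hband x)
  calc a * x * b = a * (x * (a * b) * x) * b := by rw [hxabx]
    _ = (a * x * a) * (b * x * b) := by simp only [mul_assoc]
    _ = a * b := by rw [haxa, hbxb]

def supportFiber (m : B) : Set B := {c | prinIdeal c = prinIdeal m}

end Band

structure IsSemigroupIdeal {B : Type*} [Mul B] (T : Set B) : Prop where
  mul_mem_left : ∀ (a : B) {b : B}, b ∈ T → a * b ∈ T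
  mul_mem_right : ∀ {a : B} (b : B), a ∈ T → a * b ∈ T

theorem isSemigroupIdeal_union_supportFiber {B : Type*} [Semigroup B]
    (hband : ∀ x : B, x * x = x) {T : Set B} (hT : IsSemigroupIdeal T) {m : B}
    (hm : MinimalFor (· ∈ Tᶜ) prinIdeal m) : IsSemigroupIdeal (T ∪ supportFiber m) := by
  have absorb : ∀ {s c : B}, s ∈ supportFiber m → prinIdeal c ⊆ prinIdeal s →
      c ∈ T ∪ supportFiber m := by
    intro s c hs hcs
    by_cases hc : c ∈ T
    · exact Or.inl hc
    · have hcm : prinIdeal c ⊆ prinIdeal m := hs ▸ hcs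
      exact Or.inr (hcm.antisymm (hm.2 hc hcm))
  constructor
  · rintro a b (hb | hb)
    · exact Or.inl (hT.mul_mem_left a hb)
    · exact absorb hb (prinIdeal_mul_subset_right hband a b)
  · rintro a b (ha | ha)
    · exact Or.inl (hT.mul_mem_right b ha)
    · exact absorb ha (prinIdeal_mul_subset_left hband a b)

theorem single_mem_supported {B k : Type*} [Semiring k] {U : Set B} {b : B} (hb : b ∈ U)
    (r : k) : single b r ∈ supported k k U :=
  Finsupp.single_mem_supported k r hb

theorem supported_le_comap_of_single_mem {B k M : Type*} [Semiring k] [AddCommMonoid M]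
    [Module k M] {L : k[B] →ₗ[k] M} {S : Submodule k M} {U : Set B}
    (h : ∀ b ∈ U, L (single b 1) ∈ S) : supported k k U ≤ S.comap L := by
  rw [supported_eq_span_single, Submodule.span_le]
  rintro _ ⟨b, hb, rfl⟩
  exact h b hb

section SemigroupAlgebra

variable {B k : Type*} [Mul B] [Semiring k] {T : Set B}

theorem IsSemigroupIdeal.mul_mem_supported_left (hT : IsSemigroupIdeal T) (f : k[B]) {g : k[B]}
    (hg : g ∈ supported k k T) : f * g ∈ supported k k T := by
  classical
  intro x hx
  obtain ⟨a, -, b, hb, rfl⟩ := Finset.mem_mul.mp (support_coeff_mul_subset f g hx)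
  exact hT.mul_mem_left a (hg hb)

theorem IsSemigroupIdeal.mul_mem_supported_right (hT : IsSemigroupIdeal T) {f : k[B]}
    (hf : f ∈ supported k k T) (g : k[B]) : f * g ∈ supported k k T := by
  classical
  intro x hx
  obtain ⟨a, ha, b, -, rfl⟩ := Finset.mem_mul.mp (support_coeff_mul_subset f g hx)
  exact hT.mul_mem_right b (hf ha)

end SemigroupAlgebra

theorem add_sub_mul_self_mul_sub_mem {A S : Type*} [NonUnitalRing A] [SetLike S A]
    [NegMemClass S A] {I : S} {J : Set A} {u : A} (hJ : ∀ f, u * f - f ∈ J)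
    (hI : ∀ j ∈ J, u * j - j ∈ I) (f : A) : (u + u - u * u) * f - f ∈ I := by
  have h : (u + u - u * u) * f - f = -(u * (u * f - f) - (u * f - f)) := by noncomm_ring
  exact h ▸ neg_mem (hI _ (hJ f))

section LeftIdentity

variable {B k : Type*} [Semigroup B] [CommRing k] {T : Set B}

noncomputable def leftDefect (u : k[B]) (b : B) : k[B] := u * single b 1 - single b 1

theorem leftDefect_mul_of_mul_eq (u : k[B]) {y w : B} (h : y * w = w) (z : k[B]) :
    leftDefect u w * z = leftDefect u y * (single w 1 * z) := by
  have hw : (single w 1 : k[B]) = single y 1 * single w 1 := by rw [single_mul_single, h, one_mul]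
  calc leftDefect u w * z = u * (single w 1 * z) - single w 1 * z := by
        rw [leftDefect, sub_mul, mul_assoc]
    _ = leftDefect u y * (single w 1 * z) := by
        conv_lhs => rw [hw]
        simp only [leftDefect, sub_mul, mul_assoc]

theorem mul_sub_mem_supported_of_mem_supportFiber (hband : ∀ x : B, x * x = x)
    (hT : IsSemigroupIdeal T) {m a c d : B} (ha : a ∈ supportFiber m) (hc : c ∈ supportFiber m)
    (hd : d ∈ supportFiber m) {x : k[B]} (hx : x ∈ supported k k (T ∪ supportFiber m)) :
    x * (single (a * d) 1 - single (c * d) 1) ∈ supported k k T := by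
  refine supported_le_comap_of_single_mem (S := supported k k T)
    (L := LinearMap.mulRight k (single (a * d) 1 - single (c * d) 1)) (fun s hs => ?_) hx
  simp only [LinearMap.mulRight_apply, mul_sub, single_mul_single, one_mul]
  rcases hs with hs | hs
  · exact sub_mem (single_mem_supported (hT.mul_mem_right _ hs) 1)
      (single_mem_supported (hT.mul_mem_right _ hs) 1)
  · have hs : prinIdeal s = prinIdeal m := hs
    rw [← mul_assoc, ← mul_assoc,
      mul_mul_eq_mul_of_prinIdeal_eq hband (hs.trans ha.symm) (hd.trans ha.symm),
      mul_mul_eq_mul_of_prinIdeal_eq hband (hs.trans hc.symm) (hd.trans hc.symm), sub_self]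
    exact zero_mem _

theorem leftDefect_mul_sub_mem_supported (hband : ∀ x : B, x * x = x) (hT : IsSemigroupIdeal T)
    {m a c d y : B} (ha : a ∈ supportFiber m) (hc : c ∈ supportFiber m)
    (hd : d ∈ supportFiber m)
    (hya : y * a = a) (hyc : y * c = c) {u : k[B]}
    (hu : ∀ b, leftDefect u b ∈ supported k k (T ∪ supportFiber m)) :
    leftDefect u a * single d 1 - leftDefect u c * single d 1 ∈ supported k k T := by
  rw [leftDefect_mul_of_mul_eq u hya, leftDefect_mul_of_mul_eq u hyc, ← mul_sub,
    single_mul_single, single_mul_single, one_mul]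
  exact mul_sub_mem_supported_of_mem_supportFiber hband hT ha hc hd (hu y)

theorem leftDefect_sub_mem_supported (hband : ∀ x : B, x * x = x) (hR : GammaRConnected B)
    (hT : IsSemigroupIdeal T) {m d : B} (hd : d ∈ supportFiber m) {u : k[B]}
    (hu : ∀ b, leftDefect u b ∈ supported k k (T ∪ supportFiber m)) :
    leftDefect u d - leftDefect u m * single d 1 ∈ supported k k T := by
  suffices path : ∀ c, Relation.ReflTransGen
      (fun a b => prinIdeal a = prinIdeal b ∧ ∃ y : B, y * a = a ∧ y * b = b) d c →
      c ∈ supportFiber m ∧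
        leftDefect u d * single d 1 - leftDefect u c * single d 1 ∈ supported k k T by
    have hdd : leftDefect u d * single d 1 = leftDefect u d := by
      rw [leftDefect, sub_mul, mul_assoc, single_mul_single, hband, one_mul]
    simpa only [hdd] using (path m (hR d m hd)).2
  intro c h
  induction h with
  | refl => exact ⟨hd, by rw [sub_self]; exact zero_mem _⟩
  | @tail b c _ hbc ih =>
    obtain ⟨hb, hdb⟩ := ih
    obtain ⟨hbc, y, hyb, hyc⟩ := hbc
    have hc : c ∈ supportFiber m := hbc.symm.trans hb
    refine ⟨hc, ?_⟩
    simpa only [sub_add_sub_cancel] using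
      add_mem hdb (leftDefect_mul_sub_mem_supported hband hT hb hc hd hyb hyc hu)

theorem exists_left_identity_mod_of_union_supportFiber (hband : ∀ x : B, x * x = x)
    (hR : GammaRConnected B) (hT : IsSemigroupIdeal T) {m : B}
    (hTm : IsSemigroupIdeal (T ∪ supportFiber m)) {u : k[B]}
    (hu : ∀ f, u * f - f ∈ supported k k (T ∪ supportFiber m)) :
    ∃ v : k[B], ∀ f, v * f - f ∈ supported k k T := by
  set u₁ := u - leftDefect u m
  have hu₁ (f : k[B]) : u₁ * f - f ∈ supported k k (T ∪ supportFiber m) := by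
    have h : u₁ * f - f = (u * f - f) - leftDefect u m * f := by rw [sub_mul]; abel
    rw [h]
    exact sub_mem (hu f) (hTm.mul_mem_supported_right (hu _) f)
  have hfiber {d : B} (hd : d ∈ supportFiber m) : leftDefect u₁ d ∈ supported k k T := by
    have h : leftDefect u₁ d = leftDefect u d - leftDefect u m * single d 1 := by
      simp only [leftDefect, u₁, sub_mul]; abel
    rw [h]
    exact leftDefect_sub_mem_supported hband hR hT hd fun b => hu _
  have hJ : supported k k (T ∪ supportFiber m) ≤
      (supported k k T).comap (LinearMap.mulLeft k u₁ - LinearMap.id) := by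
    refine supported_le_comap_of_single_mem fun s hs => ?_
    simp only [LinearMap.sub_apply, LinearMap.mulLeft_apply, LinearMap.id_apply]
    rcases hs with hs | hs
    · exact sub_mem (hT.mul_mem_supported_left _ (single_mem_supported hs 1))
        (single_mem_supported hs 1)
    · exact hfiber hs
  exact ⟨_, add_sub_mul_self_mul_sub_mem hu₁ fun w hw => by simpa using hJ hw⟩

theorem exists_left_identity_mod [Finite B] (hband : ∀ x : B, x * x = x)
    (hR : GammaRConnected B) (T : Set B) (hT : IsSemigroupIdeal T) :
    ∃ u : k[B], ∀ f, u * f - f ∈ supported k k T := by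
  induction T using WellFoundedGT.induction with
  | _ T ih =>
  rcases Tᶜ.eq_empty_or_nonempty with hTc | hTc
  · refine ⟨0, fun f => ?_⟩
    rw [Set.compl_empty_iff.1 hTc]
    exact mem_supported.2 (Set.subset_univ _)
  obtain ⟨m, hm⟩ := Tᶜ.toFinite.exists_minimalFor prinIdeal Tᶜ hTc
  have hTm := isSemigroupIdeal_union_supportFiber hband hT hm
  have hlt : T < T ∪ supportFiber m :=
    Set.ssubset_iff_of_subset Set.subset_union_left |>.2 ⟨m, Or.inr rfl, hm.1⟩
  obtain ⟨u, hu⟩ := ih _ hlt hTm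
  exact exists_left_identity_mod_of_union_supportFiber hband hR hT hTm hu

theorem exists_left_identity [Finite B] (hband : ∀ x : B, x * x = x) (hR : GammaRConnected B) :
    ∃ e : k[B], ∀ f, e * f = f := by
  obtain ⟨e, he⟩ := exists_left_identity_mod (k := k) hband hR ∅ (by constructor <;> simp)
  refine ⟨e, fun f => sub_eq_zero.1 ?_⟩
  simpa [supported, Finsupp.supported_empty] using he f

end LeftIdentity

section Opposite

open MulOpposite

variable {B : Type*} [Semigroup B]

theorem prinIdeal_op (a : B) : prinIdeal (op a) = unop ⁻¹' prinIdeal a := by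
  ext z
  constructor
  · rintro ⟨u, v, rfl⟩
    exact ⟨v.unop, u.unop, by simp [mul_assoc]⟩
  · rintro ⟨u, v, h⟩
    exact ⟨op v, op u, unop_injective (by simp [h, mul_assoc])⟩

theorem prinIdeal_op_inj {a b : B} :
    prinIdeal (op a) = prinIdeal (op b) ↔ prinIdeal a = prinIdeal b := by
  simp only [prinIdeal_op, (Set.preimage_injective.2 unop_surjective).eq_iff]

theorem GammaLConnected.op (hL : GammaLConnected B) : GammaRConnected Bᵐᵒᵖ := fun x x' h =>
  (hL x.unop x'.unop (prinIdeal_op_inj.1 h)).lift MulOpposite.op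
    fun _ _ ⟨hab, y, hay, hby⟩ =>
      ⟨prinIdeal_op_inj.2 hab, MulOpposite.op y, congrArg MulOpposite.op hay,
        congrArg MulOpposite.op hby⟩

theorem exists_right_identity {k : Type*} [CommRing k] [Finite B] (hband : ∀ x : B, x * x = x)
    (hL : GammaLConnected B) : ∃ e : k[B], ∀ f, f * e = f := by
  have : Finite Bᵐᵒᵖ := .of_equiv B opEquiv
  obtain ⟨e, he⟩ := exists_left_identity (k := kᵐᵒᵖ)
    (fun x : Bᵐᵒᵖ => unop_injective (hband x.unop)) hL.op
  refine ⟨(MonoidAlgebra.opRingEquiv.symm e).unop, fun f => op_injective ?_⟩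
  apply MonoidAlgebra.opRingEquiv.injective
  rw [op_mul, op_unop, map_mul, RingEquiv.apply_symm_apply, he]

end Opposite

/-- The semigroup algebra of a finite connected band over any commutative ring has a
two-sided identity. -/
theorem connected_band_algebra_unital {B : Type*} [Semigroup B] [Fintype B]
    (hband : ∀ x : B, x * x = x) (hR : GammaRConnected B) (hL : GammaLConnected B)
    (k : Type*) [CommRing k] :
    ∃ e : MonoidAlgebra k B, ∀ f : MonoidAlgebra k B, e * f = f ∧ f * e = f := by
  obtain ⟨eₗ, heₗ⟩ := exists_left_identity (k := k) hband hR
  obtain ⟨eᵣ, heᵣ⟩ := exists_right_identity (k := k) hband hL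
  have h : eₗ = eᵣ := (heᵣ eₗ).symm.trans (heₗ eᵣ)
  exact ⟨eₗ, fun f => ⟨heₗ f, h ▸ heᵣ f⟩⟩
end

section
/- Let B be a finite band such that the integral semigroup algebra ℤB has a two-sided identity. Then for every X ∈ Λ(B), the graph Γ_R(B,X) (vertices σ⁻¹(X), edges between elements with a common ≤_R upper bound) is connected. -/
namespace MonoidAlgebra

variable {R M : Type*} [Semiring R] [Mul M]

theorem coeff_mul_single_one_eq_mapDomain (x : MonoidAlgebra R M) (m : M) :
    (x * single m 1).coeff = Finsupp.mapDomain (· * m) x.coeff := by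
  simp [mul_def, Finsupp.mapDomain]

theorem apply_eq_apply_of_forall_mul_eq [Nontrivial R] {α : Type*} {e : MonoidAlgebra R M}
    (he : ∀ f, e * f = f) (g : M → α) {m m' : M} (h : ∀ b, g (b * m) = g (b * m')) :
    g m = g m' := by
  have key (n : M) : Finsupp.single (g n) (1 : R) = Finsupp.mapDomain (g ∘ (· * n)) e.coeff := by
    rw [Finsupp.mapDomain_comp, ← coeff_mul_single_one_eq_mapDomain, he, coeff_single,
      Finsupp.mapDomain_single]
  refine (Finsupp.single_left_inj one_ne_zero).1 (?_ : Finsupp.single _ (1 : R) = _)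
  simp only [key, Function.comp_def, h]

end MonoidAlgebra

section Band

variable {B : Type*} [Semigroup B]

theorem band_sandwich (hband : ∀ x : B, x * x = x) (u y v : B) :
    (u * y * v) * y * (u * y * v) = u * y * v := by
  have hyv : y * (v * (y * v)) = y * v := by simpa only [mul_assoc] using hband (y * v)
  have huyvy : (u * (y * v * y)) * (u * (y * v * y)) = u * (y * v * y) := hband _
  symm
  calc u * y * v = u * ((y * v) * (y * v)) := by rw [hband (y * v), mul_assoc]
    _ = (u * (y * v * y)) * v := by simp only [mul_assoc]
    _ = ((u * (y * v * y)) * (u * (y * v * y))) * v := by rw [huyvy]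
    _ = u * (y * (v * (y * (u * (y * (v * (y * v))))))) := by simp only [mul_assoc]
    _ = (u * y * v) * y * (u * y * v) := by rw [hyv]; simp only [mul_assoc]

theorem mem_prinIdeal_iff (hband : ∀ x : B, x * x = x) {z c : B} :
    z ∈ prinIdeal c ↔ z * c * z = z := by
  constructor
  · rintro ⟨u, v, rfl⟩
    exact band_sandwich hband u c v
  · exact fun h => ⟨z, z, h.symm⟩

theorem band_mul_sandwich {z a b : B} (hband : ∀ x : B, x * x = x)
    (ha : z * a * z = z) (hb : z * b * z = z) : z * (a * b) * z = z := by
  calc z * (a * b) * z = (z * b * z) * (a * b) * (z * a * z) := by rw [hb, ha]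
    _ = z * ((b * z * a) * (b * z * a)) * z := by simp only [mul_assoc]
    _ = z * b * z * a * z := by rw [hband (b * z * a)]; simp only [mul_assoc]
    _ = z := by rw [hb, ha]

theorem prinIdeal_mul (hband : ∀ x : B, x * x = x) (a b : B) :
    prinIdeal (a * b) = prinIdeal a ∩ prinIdeal b := by
  ext z
  refine ⟨?_, fun ⟨hza, hzb⟩ => ?_⟩
  · rintro ⟨u, v, rfl⟩
    exact ⟨⟨u, b * v, by simp only [mul_assoc]⟩, ⟨u * a, v, by simp only [mul_assoc]⟩⟩
  · rw [mem_prinIdeal_iff hband] at hza hzb ⊢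
    exact band_mul_sandwich hband hza hzb

/-- The edge relation of the graphs `Γ_R(B, X)`, for all `X ∈ Λ(B)` at once. -/
def GammaRAdj (u v : B) : Prop :=
  prinIdeal u = prinIdeal v ∧ ∃ y : B, y * u = u ∧ y * v = v

theorem GammaRAdj.symm {u v : B} (h : GammaRAdj u v) : GammaRAdj v u :=
  ⟨h.1.symm, h.2.imp fun _ hy => hy.symm⟩

theorem gammaRAdj_mul_left (hband : ∀ x : B, x * x = x) {x x' : B}
    (hxx' : prinIdeal x = prinIdeal x') (b : B) : GammaRAdj (b * x) (b * x') :=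
  ⟨by rw [prinIdeal_mul hband, prinIdeal_mul hband, hxx'], b,
    by rw [← mul_assoc, hband], by rw [← mul_assoc, hband]⟩

end Band

theorem band_unital_implies_GammaR_connected_general {B : Type*} [Semigroup B]
    (hband : ∀ x : B, x * x = x)
    (hunit : ∃ e : MonoidAlgebra ℤ B, ∀ f : MonoidAlgebra ℤ B, e * f = f ∧ f * e = f) :
    ∀ x x' : B, prinIdeal x = prinIdeal x' →
      Relation.ReflTransGen
        (fun u v => prinIdeal u = prinIdeal v ∧ ∃ y : B, y * u = u ∧ y * v = v) x x' := by
  obtain ⟨e, he⟩ := hunit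
  intro x x' hxx'
  have hcomp : Relation.ReflTransGen GammaRAdj x x = Relation.ReflTransGen GammaRAdj x x' :=
    MonoidAlgebra.apply_eq_apply_of_forall_mul_eq (fun f => (he f).1)
      (Relation.ReflTransGen GammaRAdj x) fun b =>
        have hadj := gammaRAdj_mul_left hband hxx' b
        propext ⟨fun h => h.tail hadj, fun h => h.tail hadj.symm⟩
  exact hcomp ▸ Relation.ReflTransGen.refl

/-- If the integral semigroup algebra `ℤB` of a finite band `B` has a two-sided identity,
then each graph `Γ_R(B,X)` (vertices `σ⁻¹(X)`, edges between elements with a common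
`≤_R` upper bound, where `a ≤_R b` iff `ba = a`) is connected. -/
theorem band_unital_implies_GammaR_connected {B : Type*} [Semigroup B] [Fintype B]
    (hband : ∀ x : B, x * x = x)
    (hunit : ∃ e : MonoidAlgebra ℤ B, ∀ f : MonoidAlgebra ℤ B, e * f = f ∧ f * e = f) :
    ∀ x x' : B, prinIdeal x = prinIdeal x' →
      Relation.ReflTransGen
        (fun u v => prinIdeal u = prinIdeal v ∧ ∃ y : B, y * u = u ∧ y * v = v) x x' :=
  band_unital_implies_GammaR_connected_general hband hunit
end
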